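/- arXiv:2601.07561 — 2 statements merged into one kernel-verified Lean document; each statement's English description precedes it below -/
import Mathlib

section
/- Let ρ be a weight on L(G), M ≥ 1 and w ∈ ℝ, and assume that for all i ∈ I, all t ≥ 0, and almost every s ∈ [0,1] one has ρ_i(s) ≤ M e^{wt} · inf_{j∈M_{n(t,s)}(i)} ρ_j(s+t−n(t,s)). Then for every t ≥ 0 and every f ∈ L^1_ρ(L(G)), the translated family T_t f belongs to L^1_ρ(L(G)) and ‖T_t f‖_{1,ρ} ≤ M e^{wt} ‖f‖_{1,ρ}. -/
/-
Write `t = m + τ` with `m = ⌊t⌋` and `0 ≤ τ < 1`. On `[0, 1 - τ)` the map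
`σ(s) = t + s - n(t,s)` is translation by `τ` and on `[1 - τ, 1]` translation by `τ - 1`, so it
preserves Lebesgue measure on `[0,1]`. Pointwise, the admissibility bound moves the weight
`ρ_i(s)` onto the edges `j ∈ M_{n(t,s)}(i)`, giving
`|(T_t f)_i(s)| ρ_i(s) ≤ M e^{wt} ∑_j |f_j(σ(s))| ρ_j(σ(s))`. Since every edge lies in `M_n(i)`
for at most one `i`, summing over `i` and changing variables `s ↦ σ(s)` bounds `‖T_t f‖_{1,ρ}`
by `M e^{wt} ‖f‖_{1,ρ}`.
-/

open MeasureTheory ENNReal Filter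

noncomputable section

variable {I : Type*}

/-- The `n`-fold iterate of the parent map `P : I → Option I` of a directed metric tree,
encoded on the set of edges `I`. -/
def pIter (P : I → Option I) : ℕ → I → Option I
  | 0, j => some j
  | n + 1, j => (P j).bind (pIter P n)

/-- `Mset P n i` is the set of edges reachable from the edge `i` in `n` steps,
i.e. `M_n(i) = {j | P^[n] j = some i}`; `Mset P 0 i = {i}`. -/
def Mset (P : I → Option I) (n : ℕ) (i : I) : Set I := {j | pIter P n j = some i}

/-- `nfl t s = ⌊s + t⌋ ∈ ℕ`. -/
def nfl (t s : ℝ) : ℕ := ⌊s + t⌋₊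

/-- The left translation `T_t` on families of functions on the edges:
`(T_t f)_i (s) = ∑_{j ∈ M_{n(t,s)}(i)} f_j (t + s - n(t,s))`. -/
def Tleft (P : I → Option I) (f : I → ℝ → ℝ) (t : ℝ) (i : I) (s : ℝ) : ℝ :=
  ∑' j : Mset P (nfl t s) i, f (j : I) (t + s - (nfl t s : ℝ))

/-- The `p`-th power of the norm of a family `f` in `L^p_ρ(L(G))`:
`‖f‖_{p,ρ}^p = ∑_{i ∈ I} ∫_0^1 |f_i(s)|^p ρ_i(s) ds`, with values in `[0,∞]`. -/
def pnorm (ρ : I → ℝ → ℝ) (p : ℝ) (f : I → ℝ → ℝ) : ℝ≥0∞ :=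
  ∑' i, ∫⁻ s in Set.Icc (0 : ℝ) 1, ENNReal.ofReal (|f i s| ^ p * ρ i s)

/-- Membership in `L^p_ρ(L(G))`: each component is (a.e.) measurable on `[0,1]` and the
`ℓ^p`-direct sum norm is finite. -/
def memLprho (ρ : I → ℝ → ℝ) (p : ℝ) (f : I → ℝ → ℝ) : Prop :=
  (∀ i, AEMeasurable (f i) (volume.restrict (Set.Icc (0 : ℝ) 1))) ∧ pnorm ρ p f < ⊤

/-- The norm `‖f‖_{p,ρ}` in `L^p_ρ(L(G))`, with values in `[0,∞]`. -/
def enorm' (ρ : I → ℝ → ℝ) (p : ℝ) (f : I → ℝ → ℝ) : ℝ≥0∞ := pnorm ρ p f ^ (1 / p)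

/-- The distance `‖f - g‖_{p,ρ}` in `L^p_ρ(L(G))`, with values in `[0,∞]`. -/
def pdist (ρ : I → ℝ → ℝ) (p : ℝ) (f g : I → ℝ → ℝ) : ℝ≥0∞ :=
  enorm' ρ p fun i s => f i s - g i s

/-- A weight on `L(G)`: a family of integrable functions on `[0,1]`, strictly positive a.e. -/
structure IsWeight (ρ : I → ℝ → ℝ) : Prop where
  integrable : ∀ i, IntegrableOn (ρ i) (Set.Icc (0 : ℝ) 1)
  pos : ∀ i, ∀ᵐ s ∂(volume.restrict (Set.Icc (0 : ℝ) 1)), 0 < ρ i s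

/-- The `1`-admissibility condition (everywhere on `[0,1]`) with constants `M, w`:
`ρ_i(s) ≤ M e^{wt} inf_{j ∈ M_{n(t,s)}(i)} ρ_j(s+t-n(t,s))`, the infimum (in `[0,∞]`)
over the empty set being `+∞`. -/
def Admissible1 (P : I → Option I) (ρ : I → ℝ → ℝ) (M w : ℝ) : Prop :=
  ∀ i, ∀ t ≥ (0 : ℝ), ∀ s ∈ Set.Icc (0 : ℝ) 1,
    ENNReal.ofReal (ρ i s) ≤ ENNReal.ofReal (M * Real.exp (w * t)) *
      ⨅ j : Mset P (nfl t s) i, ENNReal.ofReal (ρ (j : I) (s + t - (nfl t s : ℝ)))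

/-- The `p`-admissibility condition (`1 < p < ∞`, everywhere on `[0,1]`) with constants `M, w`:
`(∑_{j ∈ M_{n(t,s)}(i)} ρ_j(s+t-n(t,s))^{-1/(p-1)})^{p-1} ≤ M^p e^{pwt} / ρ_i(s)`,
the sum being taken in `[0,∞]`. -/
def AdmissibleP (P : I → Option I) (ρ : I → ℝ → ℝ) (p M w : ℝ) : Prop :=
  ∀ i, ∀ t ≥ (0 : ℝ), ∀ s ∈ Set.Icc (0 : ℝ) 1,
    (∑' j : Mset P (nfl t s) i,
        ENNReal.ofReal ((ρ (j : I) (s + t - (nfl t s : ℝ))) ^ (-(1 / (p - 1))))) ^ (p - 1)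
      ≤ ENNReal.ofReal (M ^ p * Real.exp (p * w * t) / ρ i s)

/-- `p`-admissibility, `1 ≤ p < ∞`. -/
def Admissible (P : I → Option I) (ρ : I → ℝ → ℝ) (p M w : ℝ) : Prop :=
  (p = 1 → Admissible1 P ρ M w) ∧ (1 < p → AdmissibleP P ρ p M w)

open Set

theorem ENNReal.ofReal_abs_tsum_mul_le {ι : Type*} (a b : ι → ℝ) {r : ℝ} {C : ℝ≥0∞}
    (h : ENNReal.ofReal r ≤ C * ⨅ j, ENNReal.ofReal (b j)) :
    ENNReal.ofReal (|∑' j, a j| * r) ≤ C * ∑' j, ENNReal.ofReal (|a j| * b j) :=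
  calc ENNReal.ofReal (|∑' j, a j| * r)
      = ‖∑' j, a j‖ₑ * ENNReal.ofReal r := by
        rw [ENNReal.ofReal_mul (abs_nonneg _), Real.enorm_eq_ofReal_abs]
    _ ≤ (∑' j, ‖a j‖ₑ) * (C * ⨅ j, ENNReal.ofReal (b j)) :=
        mul_le_mul' enorm_tsum_le_tsum_enorm h
    _ = C * ∑' j, ‖a j‖ₑ * ⨅ j, ENNReal.ofReal (b j) := by
        rw [ENNReal.tsum_mul_right, mul_left_comm]
    _ ≤ C * ∑' j, ENNReal.ofReal (|a j| * b j) := by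
        gcongr with j
        rw [ENNReal.ofReal_mul (abs_nonneg _), Real.enorm_eq_ofReal_abs]
        gcongr
        exact iInf_le _ j

theorem AEMeasurable.of_measurable_index {α β ι : Type*} [MeasurableSpace α]
    [MeasurableSpace β] [MeasurableSpace ι] [MeasurableSingletonClass ι] [Countable ι]
    {μ : Measure α} {N : α → ι} (hN : Measurable N) {F : ι → α → β} (hF : ∀ n, AEMeasurable (F n) μ) :
    AEMeasurable (fun x => F (N x) x) μ := by
  have hcover : (⋃ n, N ⁻¹' {n}) = univ := by ext x; simp
  rw [← Measure.restrict_univ (μ := μ), ← hcover, aemeasurable_iUnion_iff]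
  refine fun n => (hF n).restrict.congr ?_
  filter_upwards [ae_restrict_mem (hN (measurableSet_singleton n))] with x hx
  rw [mem_preimage, mem_singleton_iff] at hx
  rw [hx]

theorem MeasureTheory.MeasurePreserving.lintegral_comp_of_aemeasurable {α β : Type*}
    [MeasurableSpace α] [MeasurableSpace β] {μ : Measure α} {ν : Measure β} {g : α → β}
    (hg : MeasurePreserving g μ ν) {f : β → ℝ≥0∞} (hf : AEMeasurable f ν) :
    ∫⁻ a, f (g a) ∂μ = ∫⁻ b, f b ∂ν := by
  rw [← hg.map_eq] at hf ⊢
  exact (lintegral_map' hf hg.measurable.aemeasurable).symm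

theorem tsum_tsum_Mset_le (P : I → Option I) (n : ℕ) (v : I → ℝ≥0∞) :
    ∑' i, ∑' j : Mset P n i, v j ≤ ∑' j, v j :=
  calc ∑' i, ∑' j : Mset P n i, v j
      ≤ ∑' x : Option I, ∑' j : pIter P n ⁻¹' {x}, v j :=
        ENNReal.tsum_comp_le_tsum_of_injective (Option.some_injective I)
          (fun x => ∑' j : pIter P n ⁻¹' {x}, v j)
    _ = ∑' j, v j := ENNReal.tsum_fiberwise v (pIter P n)

theorem nfl_of_add_lt_one {t s : ℝ} (ht : 0 ≤ t) (hs : 0 ≤ s) (h : s + (t - ⌊t⌋₊) < 1) :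
    nfl t s = ⌊t⌋₊ := by
  have := Nat.floor_le ht
  rw [nfl, Nat.floor_eq_iff (by linarith)]
  constructor <;> linarith

theorem nfl_of_one_le_add {t s : ℝ} (ht : 0 ≤ t) (hs : s ≤ 1)
    (h : 1 ≤ s + (t - ⌊t⌋₊)) :
    nfl t s = ⌊t⌋₊ + 1 := by
  have := Nat.floor_le ht
  have := Nat.lt_floor_add_one t
  rw [nfl, Nat.floor_eq_iff (by linarith)]
  push_cast
  constructor <;> linarith

theorem measurePreserving_add_sub_nfl {t : ℝ} (ht : 0 ≤ t) :
    MeasurePreserving (fun s => t + s - nfl t s) (volume.restrict (Icc 0 1))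
      (volume.restrict (Icc 0 1)) := by
  set τ := t - ⌊t⌋₊
  have hτ0 : 0 ≤ τ := sub_nonneg.2 (Nat.floor_le ht)
  have hτ1 : τ < 1 := by have := Nat.lt_floor_add_one t; linarith
  have hmeas : Measurable (fun s => t + s - nfl t s) :=
    (measurable_const.add measurable_id).sub
      (measurable_from_nat.comp (Nat.measurable_floor.comp (measurable_id.add_const t)))
  refine ⟨hmeas, ?_⟩
  have hlow : (volume.restrict (Ico 0 (1 - τ))).map (fun s => t + s - nfl t s) =
      volume.restrict (Ico τ 1) := by
    have h := ((measurePreserving_add_right volume τ).restrict_preimage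
      (measurableSet_Ico (a := τ) (b := 1))).map_eq
    rw [preimage_add_const_Ico, sub_self] at h
    rw [← h]
    refine Measure.map_congr ?_
    filter_upwards [ae_restrict_mem measurableSet_Ico] with s hs
    rw [nfl_of_add_lt_one ht hs.1 (by linarith [hs.2])]
    ring
  have hhigh : (volume.restrict (Icc (1 - τ) 1)).map (fun s => t + s - nfl t s) =
      volume.restrict (Icc 0 τ) := by
    have h := ((measurePreserving_add_right volume (τ - 1)).restrict_preimage
      (measurableSet_Icc (a := 0) (b := τ))).map_eq
    rw [preimage_add_const_Icc, zero_sub, neg_sub, _root_.sub_sub_cancel] at h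
    rw [← h]
    refine Measure.map_congr ?_
    filter_upwards [ae_restrict_mem measurableSet_Icc] with s hs
    rw [nfl_of_one_le_add ht hs.2 (by linarith [hs.1])]
    push_cast
    ring
  calc (volume.restrict (Icc 0 1)).map (fun s => t + s - nfl t s)
      = (volume.restrict (Ico 0 (1 - τ)) + volume.restrict (Icc (1 - τ) 1)).map
          (fun s => t + s - nfl t s) := by
        rw [← Measure.restrict_union (disjoint_left.2 fun _ h₁ h₂ => h₁.2.not_ge h₂.1)
          measurableSet_Icc, Ico_union_Icc_eq_Icc (by linarith) (by linarith)]
    _ = volume.restrict (Ico τ 1) + volume.restrict (Ico 0 τ) := by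
        rw [Measure.map_add _ _ hmeas, hlow, hhigh,
          Measure.restrict_congr_set (Ico_ae_eq_Icc (a := (0 : ℝ)) (b := τ)).symm]
    _ = volume.restrict (Icc 0 1) := by
        rw [add_comm, ← Measure.restrict_union Ico_disjoint_Ico_same measurableSet_Ico,
          Ico_union_Ico_eq_Ico hτ0 hτ1.le, Measure.restrict_congr_set Ico_ae_eq_Icc]

theorem aemeasurable_comp_add_sub_nfl {β : Type*} [MeasurableSpace β] {t : ℝ} (ht : 0 ≤ t)
    {F : ℕ → ℝ → β} (hF : ∀ n, AEMeasurable (F n) (volume.restrict (Icc 0 1))) :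
    AEMeasurable (fun s => F (nfl t s) (t + s - nfl t s)) (volume.restrict (Icc 0 1)) :=
  AEMeasurable.of_measurable_index (Nat.measurable_floor.comp (measurable_id.add_const t)) fun n =>
    (hF n).comp_quasiMeasurePreserving (measurePreserving_add_sub_nfl ht).quasiMeasurePreserving

theorem pnorm_one_Tleft_le [Countable I] {P : I → Option I} {ρ : I → ℝ → ℝ}
    (hρ : ∀ i, AEMeasurable (ρ i) (volume.restrict (Icc 0 1))) {C : ℝ≥0∞} {t : ℝ}
    (ht : 0 ≤ t)
    (hadm : ∀ i, ∀ᵐ s ∂(volume.restrict (Icc (0 : ℝ) 1)), ENNReal.ofReal (ρ i s) ≤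
      C * ⨅ j : Mset P (nfl t s) i, ENNReal.ofReal (ρ (j : I) (s + t - (nfl t s : ℝ))))
    {f : I → ℝ → ℝ} (hf : ∀ i, AEMeasurable (f i) (volume.restrict (Icc 0 1))) :
    pnorm ρ 1 (Tleft P f t) ≤ C * pnorm ρ 1 f := by
  set G : I → ℝ → ℝ≥0∞ := fun j σ => ENNReal.ofReal (|f j σ| * ρ j σ)
  have hG : ∀ j, AEMeasurable (G j) (volume.restrict (Icc 0 1)) := fun j =>
    ((hf j).abs.mul (hρ j)).ennreal_ofReal
  have hGT : ∀ i, AEMeasurable (fun s => ∑' j : Mset P (nfl t s) i, G j (t + s - nfl t s))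
      (volume.restrict (Icc 0 1)) := fun i =>
    aemeasurable_comp_add_sub_nfl ht fun n =>
      AEMeasurable.tsum (L := .unconditional _) fun (j : Mset P n i) => hG j
  have hpointwise : ∀ i, ∀ᵐ s ∂(volume.restrict (Icc (0 : ℝ) 1)),
      ENNReal.ofReal (|Tleft P f t i s| ^ (1 : ℝ) * ρ i s) ≤
        C * ∑' j : Mset P (nfl t s) i, G j (t + s - nfl t s) := fun i => by
    filter_upwards [hadm i] with s hs
    rw [add_comm s t] at hs
    rw [Real.rpow_one]
    exact ENNReal.ofReal_abs_tsum_mul_le _ _ hs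
  have hφ := measurePreserving_add_sub_nfl ht
  calc pnorm ρ 1 (Tleft P f t)
      ≤ ∑' i, ∫⁻ s in Icc 0 1, C * ∑' j : Mset P (nfl t s) i, G j (t + s - nfl t s) :=
        ENNReal.tsum_le_tsum fun i => lintegral_mono_ae (hpointwise i)
    _ = C * ∫⁻ s in Icc 0 1, ∑' i, ∑' j : Mset P (nfl t s) i, G j (t + s - nfl t s) := by
        simp_rw [lintegral_const_mul'' C (hGT _)]
        rw [ENNReal.tsum_mul_left, lintegral_tsum hGT]
    _ ≤ C * ∫⁻ s in Icc 0 1, ∑' j, G j (t + s - nfl t s) := by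
        gcongr C * ∫⁻ s in _, ?_ with s
        exact tsum_tsum_Mset_le P _ _
    _ = C * ∫⁻ σ in Icc 0 1, ∑' j, G j σ := by
        rw [hφ.lintegral_comp_of_aemeasurable (f := fun σ => ∑' j, G j σ)
          (AEMeasurable.tsum (L := .unconditional _) hG)]
    _ = C * pnorm ρ 1 f := by
        simp only [lintegral_tsum hG, pnorm, G, Real.rpow_one]

theorem translation_bounded_L1_general {I : Type*} [Countable I]
    (P : I → Option I) (ρ : I → ℝ → ℝ) (hρ : IsWeight ρ) (M w : ℝ)
    (hadm : ∀ i, ∀ t ≥ (0 : ℝ), ∀ᵐ s ∂(volume.restrict (Set.Icc (0 : ℝ) 1)),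
      ENNReal.ofReal (ρ i s) ≤ ENNReal.ofReal (M * Real.exp (w * t)) *
        ⨅ j : Mset P (nfl t s) i, ENNReal.ofReal (ρ (j : I) (s + t - (nfl t s : ℝ)))) :
    ∀ t ≥ (0 : ℝ), ∀ f, memLprho ρ 1 f →
      memLprho ρ 1 (Tleft P f t) ∧
      enorm' ρ 1 (Tleft P f t) ≤ ENNReal.ofReal (M * Real.exp (w * t)) * enorm' ρ 1 f := by
  intro t ht f hf
  have hnorm : pnorm ρ 1 (Tleft P f t) ≤ ENNReal.ofReal (M * Real.exp (w * t)) * pnorm ρ 1 f :=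
    pnorm_one_Tleft_le (fun i => (hρ.integrable i).aemeasurable) ht (fun i => hadm i t ht) hf.1
  refine ⟨⟨fun i => ?_, hnorm.trans_lt (ENNReal.mul_lt_top ofReal_lt_top hf.2)⟩, ?_⟩
  · exact aemeasurable_comp_add_sub_nfl ht fun n =>
      AEMeasurable.tsum (L := .unconditional _) fun (j : Mset P n i) => hf.1 j
  · simpa [enorm'] using hnorm

/-- **Proposition 2.2 (a), sufficiency**.  Let `ρ` be a weight on `L(G)`, `M ≥ 1`, `w ∈ ℝ`,
and assume that for all `i ∈ I`, all `t ≥ 0` and almost every `s ∈ [0,1]`,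
`ρ_i(s) ≤ M e^{wt} inf_{j ∈ M_{n(t,s)}(i)} ρ_j(s + t - n(t,s))`.  Then for every `t ≥ 0`
and every `f ∈ L^1_ρ(L(G))`, the translated family `T_t f` belongs to `L^1_ρ(L(G))` and
`‖T_t f‖_{1,ρ} ≤ M e^{wt} ‖f‖_{1,ρ}`. -/
theorem translation_bounded_L1 {I : Type*} [Countable I] [Nonempty I]
    (P : I → Option I) (ρ : I → ℝ → ℝ) (hρ : IsWeight ρ) (M w : ℝ) (hM : 1 ≤ M)
    (hadm : ∀ i, ∀ t ≥ (0 : ℝ), ∀ᵐ s ∂(volume.restrict (Set.Icc (0 : ℝ) 1)),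
      ENNReal.ofReal (ρ i s) ≤ ENNReal.ofReal (M * Real.exp (w * t)) *
        ⨅ j : Mset P (nfl t s) i, ENNReal.ofReal (ρ (j : I) (s + t - (nfl t s : ℝ)))) :
    ∀ t ≥ (0 : ℝ), ∀ f, memLprho ρ 1 f →
      memLprho ρ 1 (Tleft P f t) ∧
      enorm' ρ 1 (Tleft P f t) ≤ ENNReal.ofReal (M * Real.exp (w * t)) * enorm' ρ 1 f :=
  translation_bounded_L1_general P ρ hρ M w hadm
end
end

section
/- Let 1 ≤ p < ∞ and let ρ be a p-admissible weight on L(G) with constants M ≥ 1 and w ∈ ℝ. Then for every family g = (g_i)_{i∈I} such that each g_i : [0,1] → ℝ is continuous and g_i = 0 for all but finitely many i ∈ I, one has lim_{t→0⁺} ‖T_t g − g‖_{p,ρ} = 0. -/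
open MeasureTheory ENNReal Filter

noncomputable section

variable {I : Type*}

/-! For `0 < t < 1` the translate `T_t g` differs from `g` only on the finitely many edges that
carry `g` or are parents of such edges, so it suffices to treat one edge `i`. There, for
`s < 1 - t` the translate is `g_i (s + t)`, uniformly close to `g_i s` by uniform continuity; on
the tail `[1 - t, 1]` the difference is merely bounded, but the `ρ_i`-mass of the tail tends to
`0` because `ρ_i` is integrable. -/

open Set Topology

theorem tendsto_lintegral_mul_of_le_of_small_off {α ι : Type*} [MeasurableSpace α]
    {μ : Measure α} {l : Filter ι} {F : ι → α → ℝ≥0∞} {w : α → ℝ≥0∞} {E : ι → Set α}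
    {b : ℝ≥0∞} (hw : ∫⁻ x, w x ∂μ ≠ ⊤) (hE : ∀ t, MeasurableSet (E t))
    (hwE : Tendsto (fun t => ∫⁻ x in E t, w x ∂μ) l (𝓝 0)) (hb : b ≠ ⊤)
    (hFb : ∀ᶠ t in l, ∀ᵐ x ∂μ, F t x ≤ b)
    (hFsmall : ∀ ε > 0, ∀ᶠ t in l, ∀ᵐ x ∂μ, x ∉ E t → F t x ≤ ε) :
    Tendsto (fun t => ∫⁻ x, F t x * w x ∂μ) l (𝓝 0) := by
  rw [ENNReal.tendsto_nhds_zero]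
  intro η hη
  obtain ⟨ε, hε, hεη⟩ := ENNReal.exists_nnreal_pos_mul_lt hw hη.ne'
  have hbound : Tendsto (fun t => ε * ∫⁻ x, w x ∂μ + b * ∫⁻ x in E t, w x ∂μ) l
      (𝓝 (ε * ∫⁻ x, w x ∂μ)) := by
    simpa using tendsto_const_nhds.add (ENNReal.Tendsto.const_mul hwE (Or.inr hb))
  filter_upwards [hFb, hFsmall ε (by exact_mod_cast hε), hbound.eventually (gt_mem_nhds hεη)]
    with t hFb hFsmall hlt
  refine le_of_lt (lt_of_le_of_lt ?_ hlt)
  rw [← lintegral_add_compl _ (hE t), add_comm]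
  gcongr ?_ + ?_
  · calc ∫⁻ x in (E t)ᶜ, F t x * w x ∂μ ≤ ∫⁻ x in (E t)ᶜ, ε * w x ∂μ := by
          refine lintegral_mono_ae ((ae_restrict_iff' (hE t).compl).mpr ?_)
          filter_upwards [hFsmall] with x hx hxE
          gcongr
          exact hx hxE
      _ ≤ ε * ∫⁻ x, w x ∂μ := by
          rw [lintegral_const_mul' _ _ ENNReal.coe_ne_top]
          exact mul_le_mul_right (setLIntegral_le_lintegral _ _) _
  · calc ∫⁻ x in E t, F t x * w x ∂μ ≤ ∫⁻ x in E t, b * w x ∂μ := by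
          refine lintegral_mono_ae (ae_restrict_of_ae ?_)
          filter_upwards [hFb] with x hx
          gcongr
      _ = b * ∫⁻ x in E t, w x ∂μ := lintegral_const_mul' _ _ hb

theorem abs_tsum_subtype_le_sum {A : Set I} {h : I → ℝ} {S : Finset I}
    (hS : ∀ j ∉ S, h j = 0) : |∑' j : A, h j| ≤ ∑ j ∈ S, |h j| := by
  rw [tsum_subtype A h, tsum_eq_sum fun j hj => by simp [hS j hj]]
  refine (Finset.abs_sum_le_sum_abs _ _).trans (Finset.sum_le_sum fun j _ => ?_)
  exact norm_indicator_le_norm_self h j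

section Translation

variable (P : I → Option I)

theorem mem_Mset_zero {i j : I} : j ∈ Mset P 0 i ↔ j = i := by
  simp [Mset, pIter]

theorem mem_Mset_one {i j : I} : j ∈ Mset P 1 i ↔ P j = some i := by
  cases h : P j <;> simp [Mset, pIter, h]

theorem sub_nfl_mem_Icc {t s : ℝ} (h : 0 ≤ s + t) : t + s - nfl t s ∈ Icc (0 : ℝ) 1 := by
  have hle := Nat.floor_le h
  have hlt := Nat.lt_floor_add_one (s + t)
  unfold nfl
  constructor <;> linarith

theorem Tleft_of_add_lt_one (f : I → ℝ → ℝ) {t s : ℝ} (h : s + t < 1) (i : I) :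
    Tleft P f t i s = f i (t + s) := by
  have hMset : Mset P 0 i = {i} := Set.ext fun j => mem_Mset_zero P
  rw [Tleft, nfl, Nat.floor_eq_zero.mpr h, hMset, Nat.cast_zero, sub_zero]
  exact tsum_singleton i fun j => f j (t + s)

theorem Tleft_eq_zero {f : I → ℝ → ℝ} {t s : ℝ} (h0 : 0 ≤ s + t) (h2 : s + t < 2) {i : I}
    (hfi : f i = 0) (hchild : ∀ j, P j = some i → f j = 0) : Tleft P f t i s = 0 := by
  have hvanish : ∀ j ∈ Mset P (nfl t s) i, f j = 0 := by
    intro j hj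
    have hn : nfl t s < 2 := (Nat.floor_lt h0).mpr (by exact_mod_cast h2)
    interval_cases hnfl : nfl t s
    · rwa [(mem_Mset_zero P).mp hj]
    · exact hchild j ((mem_Mset_one P).mp hj)
  rw [Tleft]
  exact (tsum_congr fun j : Mset P (nfl t s) i => by rw [hvanish j j.2, Pi.zero_apply]).trans
    tsum_zero

theorem abs_Tleft_le {f : I → ℝ → ℝ} {S : Finset I} (hS : ∀ j ∉ S, f j = 0) {C : I → ℝ}
    (hC : ∀ j, ∀ x ∈ Icc (0 : ℝ) 1, |f j x| ≤ C j) {t s : ℝ} (h : 0 ≤ s + t) (i : I) :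
    |Tleft P f t i s| ≤ ∑ j ∈ S, C j :=
  (abs_tsum_subtype_le_sum fun j hj => by rw [hS j hj, Pi.zero_apply]).trans
    (Finset.sum_le_sum fun j _ => hC j _ (sub_nfl_mem_Icc h))

end Translation

section Continuity

variable (P : I → Option I) {g : I → ℝ → ℝ}

theorem exists_abs_Tleft_sub_le (hg : ∀ i, ContinuousOn (g i) (Icc (0 : ℝ) 1))
    (hfin : {i | g i ≠ 0}.Finite) (i : I) :
    ∃ B, ∀ t ≥ (0 : ℝ), ∀ s ∈ Icc (0 : ℝ) 1, |Tleft P g t i s - g i s| ≤ B := by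
  choose C hC using fun j => isCompact_Icc.exists_bound_of_continuousOn (hg j)
  refine ⟨∑ j ∈ hfin.toFinset, C j + C i, fun t ht s hs => ?_⟩
  have hS : ∀ j ∉ hfin.toFinset, g j = 0 := by simp
  exact (abs_sub _ _).trans
    (add_le_add (abs_Tleft_le P hS hC (by linarith [hs.1]) i) (hC i s hs))

theorem eventually_abs_Tleft_sub_lt {i : I} (hgi : ContinuousOn (g i) (Icc (0 : ℝ) 1))
    {ε : ℝ} (hε : 0 < ε) :
    ∀ᶠ t in 𝓝[>] 0, ∀ s ∈ Icc (0 : ℝ) 1, s + t < 1 → |Tleft P g t i s - g i s| < ε := by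
  obtain ⟨δ, hδ, hδε⟩ := Metric.uniformContinuousOn_iff.mp
    (isCompact_Icc.uniformContinuousOn_of_continuous hgi) ε hε
  filter_upwards [Ioo_mem_nhdsGT hδ] with t ht s hs hst
  rw [Tleft_of_add_lt_one P g hst]
  refine hδε _ ⟨by linarith [ht.1, hs.1], by linarith⟩ s hs ?_
  rw [Real.dist_eq, add_sub_cancel_right, abs_of_pos ht.1]
  exact ht.2

theorem tendsto_lintegral_Tleft_sub {p : ℝ} (hp : 0 < p) {ρ : ℝ → ℝ}
    (hρ : IntegrableOn ρ (Icc (0 : ℝ) 1)) (hg : ∀ i, ContinuousOn (g i) (Icc (0 : ℝ) 1))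
    (hfin : {i | g i ≠ 0}.Finite) (i : I) :
    Tendsto (fun t => ∫⁻ s in Icc (0 : ℝ) 1, ENNReal.ofReal (|Tleft P g t i s - g i s| ^ p * ρ s))
      (𝓝[>] 0) (𝓝 0) := by
  obtain ⟨B, hB⟩ := exists_abs_Tleft_sub_le P hg hfin i
  have hρfin : ∫⁻ s in Icc (0 : ℝ) 1, ENNReal.ofReal (ρ s) ≠ ⊤ := hρ.lintegral_lt_top.ne
  simp_rw [ENNReal.ofReal_mul (Real.rpow_nonneg (abs_nonneg _) _)]
  refine tendsto_lintegral_mul_of_le_of_small_off (E := fun t => Icc (1 - t) 1)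
    (b := ENNReal.ofReal (B ^ p)) hρfin (fun _ => measurableSet_Icc) ?tail ENNReal.ofReal_ne_top
    ?bound ?small
  case tail =>
    refine tendsto_setLIntegral_zero hρfin ?_
    have hvol : Tendsto (fun t : ℝ => ENNReal.ofReal t) (𝓝[>] 0) (𝓝 0) := by
      simpa using (ENNReal.tendsto_ofReal (tendsto_id (x := 𝓝 (0 : ℝ)))).mono_left
        nhdsWithin_le_nhds
    refine tendsto_of_tendsto_of_tendsto_of_le_of_le tendsto_const_nhds hvol
      (fun _ => zero_le) fun t => ?_
    calc _ ≤ volume (Icc (1 - t) 1) := Measure.restrict_apply_le _ _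
      _ = ENNReal.ofReal t := by simp [Real.volume_Icc]
  case bound =>
    filter_upwards [self_mem_nhdsWithin] with t ht
    filter_upwards [ae_restrict_mem measurableSet_Icc] with s hs
    exact ENNReal.ofReal_le_ofReal
      (Real.rpow_le_rpow (abs_nonneg _) (hB t (le_of_lt ht) s hs) hp.le)
  case small =>
    intro ε hε
    have hcont : Tendsto (fun y : ℝ => ENNReal.ofReal (|y| ^ p)) (𝓝 0) (𝓝 0) := by
      simpa [Real.zero_rpow hp.ne'] using
        ENNReal.tendsto_ofReal ((continuous_abs.tendsto 0).rpow_const (Or.inr hp.le))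
    obtain ⟨η, hη, hηε⟩ := Metric.eventually_nhds_iff.mp (hcont.eventually (Iic_mem_nhds hε))
    filter_upwards [eventually_abs_Tleft_sub_lt P (hg i) hη] with t ht
    filter_upwards [ae_restrict_mem measurableSet_Icc] with s hs hsE
    have hst : s + t < 1 := by linarith [lt_of_not_ge fun h => hsE ⟨h, hs.2⟩]
    refine hηε ?_
    rw [Real.dist_eq, sub_zero]
    exact ht s hs hst

end Continuity

theorem pnorm_eq_sum_of_eqOn_zero {ρ : I → ℝ → ℝ} {p : ℝ} (hp : 0 < p)
    {f : I → ℝ → ℝ} (S : Finset I) (hS : ∀ i ∉ S, ∀ s ∈ Icc (0 : ℝ) 1, f i s = 0) :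
    pnorm ρ p f = ∑ i ∈ S, ∫⁻ s in Icc (0 : ℝ) 1, ENNReal.ofReal (|f i s| ^ p * ρ i s) := by
  refine tsum_eq_sum fun i hi => ?_
  rw [setLIntegral_congr_fun measurableSet_Icc fun s hs => by
    rw [hS i hi s hs, abs_zero, Real.zero_rpow hp.ne', zero_mul, ENNReal.ofReal_zero]]
  exact lintegral_zero

theorem tendsto_translation_of_continuous_finsupp_general {I : Type*}
    (P : I → Option I) (p : ℝ) (hp : 1 ≤ p) (ρ : I → ℝ → ℝ)
    (hint : ∀ i, IntegrableOn (ρ i) (Set.Icc (0 : ℝ) 1))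
    (g : I → ℝ → ℝ) (hg : ∀ i, ContinuousOn (g i) (Set.Icc (0 : ℝ) 1))
    (hfin : {i | g i ≠ 0}.Finite) :
    Filter.Tendsto (fun t => pdist ρ p (Tleft P g t) g)
      (nhdsWithin 0 (Set.Ioi 0)) (nhds 0) := by
  classical
  have hp0 : 0 < p := by linarith
  set S := hfin.toFinset ∪ hfin.toFinset.biUnion fun j => (P j).toFinset
  have hvanish : ∀ t ∈ Ioo (0 : ℝ) 1, ∀ i ∉ S, ∀ s ∈ Icc (0 : ℝ) 1,
      Tleft P g t i s - g i s = 0 := by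
    intro t ht i hi s hs
    simp only [S, Finset.mem_union, Finset.mem_biUnion, Set.Finite.mem_toFinset,
      Set.mem_ofPred_eq, Option.mem_toFinset, Option.mem_def, not_or, not_exists, not_and,
      not_not] at hi
    rw [Tleft_eq_zero P (by linarith [hs.1, ht.1]) (by linarith [hs.2, ht.2]) hi.1
      fun j hj => by_contra fun hgj => hi.2 j hgj hj, hi.1, Pi.zero_apply, sub_zero]
  have hpnorm :
      Tendsto (fun t => pnorm ρ p fun i s => Tleft P g t i s - g i s) (𝓝[>] 0) (𝓝 0) := by
    have hsum := tendsto_finsetSum S fun i _ =>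
      tendsto_lintegral_Tleft_sub P hp0 (hint i) hg hfin i
    rw [Finset.sum_const_zero] at hsum
    refine hsum.congr' ?_
    filter_upwards [Ioo_mem_nhdsGT one_pos] with t ht
    exact (pnorm_eq_sum_of_eqOn_zero hp0 S (hvanish t ht)).symm
  have hroot := (ENNReal.continuous_rpow_const (y := 1 / p)).tendsto 0
  rw [ENNReal.zero_rpow_of_pos (one_div_pos.mpr hp0)] at hroot
  exact hroot.comp hpnorm

/-- **Strong continuity on finitely supported continuous families**.  Let `1 ≤ p < ∞` and let
`ρ` be a `p`-admissible weight on `L(G)` with constants `M ≥ 1`, `w ∈ ℝ`.  Then for every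
family `g = (g_i)_{i ∈ I}` with each `g_i : [0,1] → ℝ` continuous and `g_i = 0` for all but
finitely many `i`, one has `lim_{t → 0⁺} ‖T_t g - g‖_{p,ρ} = 0`. -/
theorem tendsto_translation_of_continuous_finsupp {I : Type*} [Countable I] [Nonempty I]
    (P : I → Option I) (p : ℝ) (hp : 1 ≤ p) (ρ : I → ℝ → ℝ)
    (hint : ∀ i, IntegrableOn (ρ i) (Set.Icc (0 : ℝ) 1))
    (hpos : ∀ i, ∀ s ∈ Set.Icc (0 : ℝ) 1, 0 < ρ i s)
    (M w : ℝ) (hM : 1 ≤ M) (hadm : Admissible P ρ p M w)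
    (g : I → ℝ → ℝ) (hg : ∀ i, ContinuousOn (g i) (Set.Icc (0 : ℝ) 1))
    (hfin : {i | g i ≠ 0}.Finite) :
    Filter.Tendsto (fun t => pdist ρ p (Tleft P g t) g)
      (nhdsWithin 0 (Set.Ioi 0)) (nhds 0) :=
  tendsto_translation_of_continuous_finsupp_general P p hp ρ hint g hg hfin

end
end
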